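/- arXiv:1602.04975 — 9 statements merged into one kernel-verified Lean document; each statement's English description precedes it below -/
import Mathlib

section
/- Fix T > 0 and real parameters α1, α2, σ11, σ12, σ21, σ22 with Δ := (σ11−σ21)² + (σ12−σ22)² > 0. Then there exists exactly one continuous function k1 : [0,T] → ℝ satisfying the integral equation for k1, i.e. k1(t) = (1/Δ)·{ (α1−α2)·( exp( −∫_t^T [ (σ21 + k1(s)(σ11−σ21))² + (σ22 + k1(s)(σ12−σ22))² ] ds ) − 1 ) − σ21(σ11−σ21) − σ22(σ12−σ22) } for all t ∈ [0,T]. -/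
/-!
Put `f x = (σ21 + x (σ11 - σ21))² + (σ22 + x (σ12 - σ22))²` and let `g` be the affine function of
`exp (-y)` with `k1RHS … k t = g (∫ s in t..T, f (k s))`. Then `k` solves the equation iff
`k = g ∘ I` where `I t = ∫ s in t..T, f (g (I s))`, i.e. `I' = -f (g I)`, `I T = 0`. As `f ≥ 0`,
every such `I` is nonnegative on `[0, T]`, and on `[0, ∞)` the field `y ↦ f (g y) = P (exp (-y))`,
`P` a polynomial, is bounded and Lipschitz. Truncating it at `y = 0` therefore gives a globally
Lipschitz bounded field, for which Picard–Lindelöf yields a solution on the whole of `[0, T]` and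
Gronwall's inequality yields uniqueness.
-/

open Set MeasureTheory intervalIntegral Bornology
open scoped NNReal

noncomputable def k1RHS (T α1 α2 σ11 σ12 σ21 σ22 : ℝ) (k : ℝ → ℝ) (t : ℝ) : ℝ :=
  (1 / ((σ11 - σ21) ^ 2 + (σ12 - σ22) ^ 2)) *
    ((α1 - α2) *
        (Real.exp
            (-∫ s in t..T,
                ((σ21 + k s * (σ11 - σ21)) ^ 2 + (σ22 + k s * (σ12 - σ22)) ^ 2)) -
          1) -
      σ21 * (σ11 - σ21) - σ22 * (σ12 - σ22))

section BackwardIntegralEquation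

variable {E : Type*} [NormedAddCommGroup E] [NormedSpace ℝ E] [CompleteSpace E]
  {V : E → E} {a b : ℝ}

theorem exists_continuousOn_forall_mem_Icc_eq_integral {K : ℝ≥0} (hV : LipschitzWith K V)
    (hVb : IsBounded (range V)) (hab : a ≤ b) :
    ∃ I : ℝ → E, ContinuousOn I (Icc a b) ∧ ∀ t ∈ Icc a b, I t = ∫ s in t..b, V (I s) := by
  obtain ⟨L, hL⟩ : ∃ L : ℝ≥0, ∀ x, ‖V x‖ ≤ L :=
    let ⟨L, hL0, hL⟩ := hVb.exists_pos_norm_le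
    ⟨⟨L, hL0.le⟩, fun x ↦ hL _ (mem_range_self x)⟩
  have hPL : IsPicardLindelof (fun _ x ↦ -V x) (⟨b, right_mem_Icc.2 hab⟩ : Icc a b) 0
      (L * (b - a).toNNReal) 0 L K :=
    .of_time_independent (fun x _ ↦ by simpa using hL x) hV.neg.lipschitzOnWith
      (by simp [sub_nonneg.2 hab])
  obtain ⟨I, hIb, hI⟩ := hPL.exists_eq_forall_mem_Icc_hasDerivWithinAt₀
  refine ⟨I, fun t ht ↦ (hI t ht).continuousWithinAt, fun t ht ↦ ?_⟩
  have hsub : uIcc b t ⊆ Icc a b := uIcc_subset_Icc ⟨hab, le_rfl⟩ ht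
  rw [← ODE.picard_eq_of_hasDerivAt (f := fun _ x ↦ -V x) (α := I) (t₀ := b) (u := univ)
    (hV.continuous.neg.comp continuous_snd).continuousOn
    (fun s hs ↦ (hI s (hsub hs)).mono hsub) (mapsTo_univ _ _)]
  simp [hIb, intervalIntegral.integral_neg, ← integral_symm]

theorem hasDerivWithinAt_of_forall_mem_Icc_eq_integral {s : Set E} (hV : ContinuousOn V s)
    {I : ℝ → E} (hI : ContinuousOn I (Icc a b)) (hIs : MapsTo I (Icc a b) s)
    (hIeq : ∀ t ∈ Icc a b, I t = ∫ u in t..b, V (I u)) {t : ℝ} (ht : t ∈ Icc a b) :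
    HasDerivWithinAt I (-V (I t)) (Icc a b) t := by
  have hf : ContinuousOn (Function.uncurry fun (_ : ℝ) x ↦ -V x) (Icc a b ×ˢ s) :=
    (hV.comp continuousOn_snd fun p hp ↦ hp.2).neg
  refine (ODE.hasDerivWithinAt_picard_Icc ⟨ht.1.trans ht.2, le_rfl⟩ hf hI hIs 0 ht).congr_of_mem
    (fun t' ht' ↦ ?_) ht
  simp [hIeq t' ht', intervalIntegral.integral_neg, ← integral_symm]

theorem eqOn_of_forall_mem_Icc_eq_integral {s : Set E} {K : ℝ≥0} (hV : LipschitzOnWith K V s)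
    {I J : ℝ → E} (hI : ContinuousOn I (Icc a b)) (hIs : MapsTo I (Icc a b) s)
    (hIeq : ∀ t ∈ Icc a b, I t = ∫ u in t..b, V (I u))
    (hJ : ContinuousOn J (Icc a b)) (hJs : MapsTo J (Icc a b) s)
    (hJeq : ∀ t ∈ Icc a b, J t = ∫ u in t..b, V (J u)) :
    EqOn I J (Icc a b) := fun t ht ↦ by
  have hb : b ∈ Icc a b := ⟨ht.1.trans ht.2, le_rfl⟩
  have hderiv (I : ℝ → E) (hI : ContinuousOn I (Icc a b)) (hIs : MapsTo I (Icc a b) s)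
      (hIeq : ∀ t ∈ Icc a b, I t = ∫ u in t..b, V (I u)) (t : ℝ) (ht : t ∈ Ioc a b) :
      HasDerivWithinAt I (-V (I t)) (Iic t) t :=
    (hasDerivWithinAt_of_forall_mem_Icc_eq_integral hV.continuousOn hI hIs hIeq
      (Ioc_subset_Icc_self ht)).mono_of_mem_nhdsWithin (Icc_mem_nhdsLE_of_mem ht)
  refine ODE_solution_unique_of_mem_Icc_left (v := fun _ x ↦ -V x) (s := fun _ ↦ s)
    (fun _ _ ↦ LipschitzWith.id.neg.comp_lipschitzOnWith hV)
    hI (hderiv I hI hIs hIeq) (fun _ ht ↦ hIs (Ioc_subset_Icc_self ht))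
    hJ (hderiv J hJ hJs hJeq) (fun _ ht ↦ hJs (Ioc_subset_Icc_self ht)) ?_ ht
  rw [hIeq b hb, hJeq b hb, integral_same, integral_same]

end BackwardIntegralEquation

section IntegralEquation

variable {a b : ℝ}

theorem integral_comp_max_zero_of_nonneg {φ I : ℝ → ℝ} (hI0 : ∀ s ∈ Icc a b, 0 ≤ I s) {t : ℝ}
    (ht : t ∈ Icc a b) : ∫ s in t..b, φ (max (I s) 0) = ∫ s in t..b, φ (I s) := by
  refine integral_congr fun s hs ↦ ?_
  rw [uIcc_of_le ht.2] at hs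
  simp only [max_eq_left (hI0 s ⟨ht.1.trans hs.1, hs.2⟩)]

variable {F : Type*} [TopologicalSpace F] {f : F → ℝ} {g : ℝ → F}

theorem exists_unique_continuousOn_forall_mem_Icc_eq_comp_integral (hf : Continuous f)
    (hf0 : ∀ x, 0 ≤ f x) (hg : Continuous g) {K : ℝ≥0}
    (hV : LipschitzWith K fun y ↦ f (g (max y 0))) (hVb : IsBounded (range fun y ↦ f (g (max y 0))))
    (hab : a ≤ b) :
    ∃ k : ℝ → F, (ContinuousOn k (Icc a b) ∧ ∀ t ∈ Icc a b, k t = g (∫ s in t..b, f (k s))) ∧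
      ∀ l : ℝ → F, ContinuousOn l (Icc a b) →
        (∀ t ∈ Icc a b, l t = g (∫ s in t..b, f (l s))) → EqOn l k (Icc a b) := by
  obtain ⟨I, hIc, hI⟩ := exists_continuousOn_forall_mem_Icc_eq_integral hV hVb hab
  have hI0 : ∀ t ∈ Icc a b, 0 ≤ I t := fun t ht ↦
    (hI t ht).symm ▸ integral_nonneg ht.2 fun _ _ ↦ hf0 _
  refine ⟨g ∘ I, ⟨hg.comp_continuousOn hIc, fun t ht ↦ ?_⟩, fun l hl hleq ↦ ?_⟩
  · rw [Function.comp_apply, hI t ht,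
      integral_comp_max_zero_of_nonneg (φ := fun y ↦ f (g y)) hI0 ht]
    rfl
  set J : ℝ → ℝ := fun t ↦ ∫ s in t..b, f (l s)
  have hJc : ContinuousOn J (Icc a b) := by
    rw [← uIcc_of_le hab]
    refine continuousOn_primitive_interval_left ?_
    rw [uIcc_of_le hab]
    exact (hf.comp_continuousOn hl).integrableOn_Icc
  have hJ0 : ∀ t ∈ Icc a b, 0 ≤ J t := fun t ht ↦ integral_nonneg ht.2 fun _ _ ↦ hf0 _
  have hJ : ∀ t ∈ Icc a b, J t = ∫ s in t..b, f (g (max (J s) 0)) := fun t ht ↦ by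
    rw [integral_comp_max_zero_of_nonneg (φ := fun y ↦ f (g y)) hJ0 ht]
    refine integral_congr fun s hs ↦ ?_
    rw [uIcc_of_le ht.2] at hs
    simp only [J, ← hleq s ⟨ht.1.trans hs.1, hs.2⟩]
  have hJI := eqOn_of_forall_mem_Icc_eq_integral (hV.lipschitzOnWith (s := univ)) hJc
    (mapsTo_univ _ _) hJ hIc (mapsTo_univ _ _) hI
  exact fun t ht ↦ (hleq t ht).trans (congrArg g (hJI ht))

end IntegralEquation

theorem Real.lipschitzOnWith_exp_Iic_zero : LipschitzOnWith 1 exp (Iic 0) :=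
  (convex_Iic 0).lipschitzOnWith_of_nnnorm_deriv_le (fun _ _ ↦ differentiableAt_exp)
    fun x hx ↦ by
      rw [deriv_exp, ← NNReal.coe_le_coe, coe_nnnorm, norm_of_nonneg (exp_pos x).le]
      exact exp_le_one_iff.2 hx

theorem Real.exp_neg_max_zero_mem_Icc (y : ℝ) : exp (-max y 0) ∈ Icc 0 1 :=
  ⟨(exp_pos _).le, exp_le_one_iff.2 (neg_nonpos.2 (le_max_right y 0))⟩

theorem ContDiff.exists_lipschitzWith_comp_exp_neg_max {P : ℝ → ℝ} (hP : ContDiff ℝ 1 P) :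
    ∃ K, LipschitzWith K fun y ↦ P (Real.exp (-max y 0)) := by
  obtain ⟨K, hK⟩ := hP.contDiffOn.exists_lipschitzOnWith one_ne_zero (convex_Icc 0 1) isCompact_Icc
  have hmax : LipschitzWith 1 fun y : ℝ ↦ -max y 0 := (LipschitzWith.id.max_const 0).neg
  refine ⟨K * (1 * 1), lipschitzOnWith_univ.1 <| hK.comp (Real.lipschitzOnWith_exp_Iic_zero.comp
    hmax.lipschitzOnWith fun y _ ↦ neg_nonpos.2 (le_max_right y 0))
    fun y _ ↦ Real.exp_neg_max_zero_mem_Icc y⟩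

theorem Continuous.isBounded_range_comp_exp_neg_max {P : ℝ → ℝ} (hP : Continuous P) :
    IsBounded (range fun y ↦ P (Real.exp (-max y 0))) :=
  (isCompact_Icc.image hP).isBounded.subset <| range_subset_iff.2 fun y ↦
    mem_image_of_mem P (Real.exp_neg_max_zero_mem_Icc y)

theorem k1_integral_equation_exists_unique_general
    (T α1 α2 σ11 σ12 σ21 σ22 : ℝ) (hT : 0 < T) :
    ∃ k1 : ℝ → ℝ,
      (ContinuousOn k1 (Set.Icc 0 T) ∧
        ∀ t ∈ Set.Icc (0 : ℝ) T, k1 t = k1RHS T α1 α2 σ11 σ12 σ21 σ22 k1 t) ∧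
      ∀ l : ℝ → ℝ,
        ContinuousOn l (Set.Icc 0 T) →
        (∀ t ∈ Set.Icc (0 : ℝ) T, l t = k1RHS T α1 α2 σ11 σ12 σ21 σ22 l t) →
        Set.EqOn l k1 (Set.Icc 0 T) := by
  let f : ℝ → ℝ := fun x ↦ (σ21 + x * (σ11 - σ21)) ^ 2 + (σ22 + x * (σ12 - σ22)) ^ 2
  let h : ℝ → ℝ := fun e ↦ 1 / ((σ11 - σ21) ^ 2 + (σ12 - σ22) ^ 2) *
    ((α1 - α2) * (e - 1) - σ21 * (σ11 - σ21) - σ22 * (σ12 - σ22))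
  obtain ⟨K, hK⟩ := ContDiff.exists_lipschitzWith_comp_exp_neg_max (P := f ∘ h) (by fun_prop)
  exact exists_unique_continuousOn_forall_mem_Icc_eq_comp_integral (f := f)
    (g := fun y ↦ h (Real.exp (-y))) (by fun_prop) (fun _ ↦ by positivity) (by fun_prop) hK
    (Continuous.isBounded_range_comp_exp_neg_max (P := f ∘ h) (by fun_prop)) hT.le

/-- There exists exactly one continuous function `k1 : [0,T] → ℝ` satisfying the integral
equation for `k1`. -/
theorem k1_integral_equation_exists_unique
    (T α1 α2 σ11 σ12 σ21 σ22 : ℝ) (hT : 0 < T)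
    (hΔ : 0 < (σ11 - σ21) ^ 2 + (σ12 - σ22) ^ 2) :
    ∃ k1 : ℝ → ℝ,
      (ContinuousOn k1 (Set.Icc 0 T) ∧
        ∀ t ∈ Set.Icc (0 : ℝ) T, k1 t = k1RHS T α1 α2 σ11 σ12 σ21 σ22 k1 t) ∧
      ∀ l : ℝ → ℝ,
        ContinuousOn l (Set.Icc 0 T) →
        (∀ t ∈ Set.Icc (0 : ℝ) T, l t = k1RHS T α1 α2 σ11 σ12 σ21 σ22 l t) →
        Set.EqOn l k1 (Set.Icc 0 T) :=
  k1_integral_equation_exists_unique_general T α1 α2 σ11 σ12 σ21 σ22 hT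
end

section
/- Fix T > 0 and real parameters α1, α2, σ11, σ12, σ21, σ22 with Δ := (σ11−σ21)² + (σ12−σ22)² > 0 and α1 > α2. Define the Picard iterates k1^(0)(t) = 1 and, for n ≥ 1, k1^(n)(t) = (1/Δ)·{ −σ21(σ11−σ21) − σ22(σ12−σ22) + (α1−α2)·( exp( −∫_t^T [ (σ21 + k1^(n−1)(s)(σ11−σ21))² + (σ22 + k1^(n−1)(s)(σ12−σ22))² ] ds ) − 1 ) }. Then for all n ≥ 1 and all t ∈ [0,T]: −( σ21(σ11−σ21) + σ22(σ12−σ22) + (α1−α2) )/Δ ≤ k1^(n)(t) ≤ −( σ21(σ11−σ21) + σ22(σ12−σ22) )/Δ; that is, the sequence {k1^(n)} is uniformly bounded on [0,T]. -/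
/-- Uniform boundedness of the Picard iterates for the integral equation for `k1`:
with `k1⁽⁰⁾ ≡ 1` and the recursion from the paper, for all `n ≥ 1` and `t ∈ [0,T]`,
`−(σ21(σ11−σ21) + σ22(σ12−σ22) + (α1−α2))/Δ ≤ k1⁽ⁿ⁾(t) ≤ −(σ21(σ11−σ21) + σ22(σ12−σ22))/Δ`. -/
theorem picard_iterates_uniformly_bounded
    (T α1 α2 σ11 σ12 σ21 σ22 : ℝ) (hT : 0 < T)
    (hΔ : 0 < (σ11 - σ21) ^ 2 + (σ12 - σ22) ^ 2) (hα : α2 < α1)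
    (k : ℕ → ℝ → ℝ)
    (h0 : ∀ t : ℝ, k 0 t = 1)
    (hrec : ∀ (n : ℕ) (t : ℝ),
      k (n + 1) t =
        (1 / ((σ11 - σ21) ^ 2 + (σ12 - σ22) ^ 2)) *
          (-(σ21 * (σ11 - σ21)) - σ22 * (σ12 - σ22) +
            (α1 - α2) *
              (Real.exp
                  (-∫ s in t..T,
                      ((σ21 + k n s * (σ11 - σ21)) ^ 2 +
                        (σ22 + k n s * (σ12 - σ22)) ^ 2)) -
                1))) :
    ∀ n : ℕ, 1 ≤ n → ∀ t ∈ Set.Icc (0 : ℝ) T,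
      -(σ21 * (σ11 - σ21) + σ22 * (σ12 - σ22) + (α1 - α2)) /
          ((σ11 - σ21) ^ 2 + (σ12 - σ22) ^ 2) ≤ k n t ∧
      k n t ≤
        -(σ21 * (σ11 - σ21) + σ22 * (σ12 - σ22)) /
          ((σ11 - σ21) ^ 2 + (σ12 - σ22) ^ 2) := by
  intro n hn t ht
  obtain ⟨m, rfl⟩ : ∃ m, n = m + 1 := ⟨n - 1, (Nat.succ_pred_eq_of_pos hn).symm⟩
  rw [hrec]
  set I : ℝ := ∫ s in t..T,
      ((σ21 + k m s * (σ11 - σ21)) ^ 2 + (σ22 + k m s * (σ12 - σ22)) ^ 2) with hIdef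
  have hI : 0 ≤ I := intervalIntegral.integral_nonneg ht.2 (fun u _ => by positivity)
  have hE1 : Real.exp (-I) ≤ 1 := Real.exp_le_one_iff.mpr (by linarith)
  have hE0 : 0 < Real.exp (-I) := Real.exp_pos _
  have hc : ∀ X : ℝ, 1 / ((σ11 - σ21) ^ 2 + (σ12 - σ22) ^ 2) * X *
      ((σ11 - σ21) ^ 2 + (σ12 - σ22) ^ 2) = X := fun X => by field_simp
  constructor
  · rw [div_le_iff₀ hΔ, hc]
    nlinarith [mul_pos (sub_pos.mpr hα) hE0,
      mul_nonneg (sub_pos.mpr hα).le (sub_nonneg.mpr hE1)]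
  · rw [le_div_iff₀ hΔ, hc]
    nlinarith [mul_pos (sub_pos.mpr hα) hE0,
      mul_nonneg (sub_pos.mpr hα).le (sub_nonneg.mpr hE1)]
end

section
/- Fix T > 0 and real parameters α1, α2, σ11, σ12, σ21, σ22 with Δ := (σ11−σ21)² + (σ12−σ22)² > 0 and α1 > α2, and let {k1^(n)} be the Picard iterates for the integral equation for k1. Then there exists a constant M1 > 0 such that for all n ≥ 1 and all t1, t2 ∈ [0,T], |k1^(n)(t1) − k1^(n)(t2)| ≤ M1·|t1 − t2|; that is, the sequence {k1^(n)} is uniformly Lipschitz continuous (hence equicontinuous) on [0,T]. -/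
lemma exp_neg_lip {a b : ℝ} (ha : 0 ≤ a) (hb : 0 ≤ b) :
    |Real.exp (-a) - Real.exp (-b)| ≤ |a - b| := by
  wlog h : a ≤ b generalizing a b
  · rw [abs_sub_comm, abs_sub_comm a b]; exact this hb ha (le_of_not_ge h)
  have h1 : Real.exp (-b) ≤ Real.exp (-a) := Real.exp_le_exp.2 (by linarith)
  have h2 : Real.exp (-a) ≤ 1 := Real.exp_le_one_iff.2 (by linarith)
  have h3 : Real.exp (a - b) ≤ 1 := Real.exp_le_one_iff.2 (by linarith)
  have h4 : (a - b) + 1 ≤ Real.exp (a - b) := Real.add_one_le_exp _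
  have h5 : Real.exp (-b) = Real.exp (-a) * Real.exp (a - b) := by
    rw [← Real.exp_add]; ring_nf
  have h0 : 0 < Real.exp (-a) := Real.exp_pos _
  rw [abs_of_nonneg (by linarith), abs_of_nonpos (by linarith)]
  nlinarith

/-- Uniform Lipschitz continuity (hence equicontinuity) of the Picard iterates for the
integral equation for `k1`: there exists `M1 > 0` such that for all `n ≥ 1` and
`t1, t2 ∈ [0,T]`, `|k1⁽ⁿ⁾(t1) − k1⁽ⁿ⁾(t2)| ≤ M1·|t1 − t2|`. -/
theorem picard_iterates_uniformly_lipschitz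
    (T α1 α2 σ11 σ12 σ21 σ22 : ℝ) (hT : 0 < T)
    (hΔ : 0 < (σ11 - σ21) ^ 2 + (σ12 - σ22) ^ 2) (hα : α2 < α1)
    (k : ℕ → ℝ → ℝ)
    (h0 : ∀ t : ℝ, k 0 t = 1)
    (hrec : ∀ (n : ℕ) (t : ℝ),
      k (n + 1) t =
        (1 / ((σ11 - σ21) ^ 2 + (σ12 - σ22) ^ 2)) *
          (-(σ21 * (σ11 - σ21)) - σ22 * (σ12 - σ22) +
            (α1 - α2) *
              (Real.exp
                  (-∫ s in t..T,
                      ((σ21 + k n s * (σ11 - σ21)) ^ 2 +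
                        (σ22 + k n s * (σ12 - σ22)) ^ 2)) -
                1))) :
    ∃ M1 : ℝ, 0 < M1 ∧
      ∀ n : ℕ, 1 ≤ n → ∀ t1 ∈ Set.Icc (0 : ℝ) T, ∀ t2 ∈ Set.Icc (0 : ℝ) T,
        |k n t1 - k n t2| ≤ M1 * |t1 - t2| := by
  set Δ : ℝ := (σ11 - σ21) ^ 2 + (σ12 - σ22) ^ 2 with hΔdef
  set f : ℕ → ℝ → ℝ := fun n s =>
    (σ21 + k n s * (σ11 - σ21)) ^ 2 + (σ22 + k n s * (σ12 - σ22)) ^ 2 with hf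
  -- continuity of each iterate
  have hcont : ∀ n, Continuous (k n) := by
    intro n
    induction n with
    | zero =>
      have : k 0 = fun _ => (1 : ℝ) := funext h0
      rw [this]; exact continuous_const
    | succ n ih =>
      have hfc : Continuous (f n) := by
        apply Continuous.add <;> apply Continuous.pow <;>
          exact continuous_const.add (ih.mul continuous_const)
      have hint : ∀ a b : ℝ, IntervalIntegrable (f n) MeasureTheory.volume a b :=
        fun a b => hfc.intervalIntegrable a b
      have hprim : Continuous fun t => ∫ s in t..T, f n s := by
        have := intervalIntegral.continuous_primitive hint T
        have h2 : (fun t => ∫ s in t..T, f n s) = fun t => -∫ s in T..t, f n s := by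
          funext t; rw [intervalIntegral.integral_symm]
        rw [h2]; exact this.neg
      have : k (n + 1) = fun t =>
          (1 / Δ) * (-(σ21 * (σ11 - σ21)) - σ22 * (σ12 - σ22) +
            (α1 - α2) * (Real.exp (-∫ s in t..T, f n s) - 1)) := funext (hrec n)
      rw [this]
      exact continuous_const.mul (continuous_const.add ((continuous_const.mul
        ((Real.continuous_exp.comp hprim.neg).sub continuous_const))))
  have hfnonneg : ∀ n s, 0 ≤ f n s := fun n s => by positivity
  have hInonneg : ∀ n, ∀ t ∈ Set.Icc (0 : ℝ) T, 0 ≤ ∫ s in t..T, f n s := by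
    intro n t ht
    exact intervalIntegral.integral_nonneg ht.2 (fun u _ => hfnonneg n u)
  -- uniform bound on k n on [0,T]
  set K : ℝ := max 1 ((|σ21 * (σ11 - σ21) + σ22 * (σ12 - σ22)| + (α1 - α2)) / Δ) with hK
  have hkbound : ∀ n, ∀ t ∈ Set.Icc (0 : ℝ) T, |k n t| ≤ K := by
    intro n t ht
    cases n with
    | zero => rw [h0 t, abs_one]; exact le_max_left 1 _
    | succ n =>
      rw [hrec n t]
      have hI := hInonneg n t ht
      set E := Real.exp (-∫ s in t..T, f n s) with hE
      have hE1 : E ≤ 1 := Real.exp_le_one_iff.2 (by linarith)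
      have hE0 : 0 < E := Real.exp_pos _
      have hinner : |(-(σ21 * (σ11 - σ21)) - σ22 * (σ12 - σ22)) + (α1 - α2) * (E - 1)|
          ≤ |σ21 * (σ11 - σ21) + σ22 * (σ12 - σ22)| + (α1 - α2) := by
        have h1 : |(-(σ21 * (σ11 - σ21)) - σ22 * (σ12 - σ22))|
            = |σ21 * (σ11 - σ21) + σ22 * (σ12 - σ22)| := by
          rw [← abs_neg]; ring_nf
        have h2 : |(α1 - α2) * (E - 1)| ≤ (α1 - α2) := by
          rw [abs_mul, abs_of_nonneg (by linarith : (0:ℝ) ≤ α1 - α2)]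
          have : |E - 1| ≤ 1 := by rw [abs_le]; constructor <;> linarith
          nlinarith
        have h3 := abs_add_le ((-(σ21 * (σ11 - σ21)) - σ22 * (σ12 - σ22))) ((α1 - α2) * (E - 1))
        linarith
      have : |(1 / Δ) * (-(σ21 * (σ11 - σ21)) - σ22 * (σ12 - σ22) + (α1 - α2) * (E - 1))|
          ≤ (|σ21 * (σ11 - σ21) + σ22 * (σ12 - σ22)| + (α1 - α2)) / Δ := by
        rw [abs_mul, abs_of_nonneg (by positivity : (0:ℝ) ≤ 1 / Δ)]
        calc (1 / Δ) * |(-(σ21 * (σ11 - σ21)) - σ22 * (σ12 - σ22) + (α1 - α2) * (E - 1))|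
            ≤ (1 / Δ) * (|σ21 * (σ11 - σ21) + σ22 * (σ12 - σ22)| + (α1 - α2)) :=
              mul_le_mul_of_nonneg_left hinner (by positivity)
          _ = (|σ21 * (σ11 - σ21) + σ22 * (σ12 - σ22)| + (α1 - α2)) / Δ := by ring
      exact this.trans (le_max_right _ _)
  have hK1 : (1:ℝ) ≤ K := le_max_left _ _
  -- uniform bound on f n on [0,T]
  set B : ℝ := (|σ21| + K * |σ11 - σ21|) ^ 2 + (|σ22| + K * |σ12 - σ22|) ^ 2 with hB
  have hfbound : ∀ n, ∀ s ∈ Set.Icc (0 : ℝ) T, |f n s| ≤ B := by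
    intro n s hs
    rw [abs_of_nonneg (hfnonneg n s)]
    have hk := hkbound n s hs
    have h1 : |σ21 + k n s * (σ11 - σ21)| ≤ |σ21| + K * |σ11 - σ21| := by
      calc |σ21 + k n s * (σ11 - σ21)| ≤ |σ21| + |k n s * (σ11 - σ21)| := abs_add_le _ _
        _ ≤ |σ21| + K * |σ11 - σ21| := by
            rw [abs_mul]
            have := mul_le_mul_of_nonneg_right hk (abs_nonneg (σ11 - σ21))
            linarith
    have h2 : |σ22 + k n s * (σ12 - σ22)| ≤ |σ22| + K * |σ12 - σ22| := by
      calc |σ22 + k n s * (σ12 - σ22)| ≤ |σ22| + |k n s * (σ12 - σ22)| := abs_add_le _ _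
        _ ≤ |σ22| + K * |σ12 - σ22| := by
            rw [abs_mul]
            have := mul_le_mul_of_nonneg_right hk (abs_nonneg (σ12 - σ22))
            linarith
    have e1 : (σ21 + k n s * (σ11 - σ21)) ^ 2 ≤ (|σ21| + K * |σ11 - σ21|) ^ 2 := by
      rw [← sq_abs]; exact pow_le_pow_left₀ (abs_nonneg _) h1 2
    have e2 : (σ22 + k n s * (σ12 - σ22)) ^ 2 ≤ (|σ22| + K * |σ12 - σ22|) ^ 2 := by
      rw [← sq_abs]; exact pow_le_pow_left₀ (abs_nonneg _) h2 2
    simp only [hf]; linarith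
  have hBnonneg : (0:ℝ) ≤ B := by rw [hB]; positivity
  have hcnn : (0:ℝ) ≤ (α1 - α2) / Δ := div_nonneg (by linarith) hΔ.le
  refine ⟨(α1 - α2) / Δ * B + 1, by nlinarith, ?_⟩
  rintro n hn t1 ht1 t2 ht2
  obtain ⟨m, rfl⟩ : ∃ m, n = m + 1 := ⟨n - 1, (Nat.succ_pred_eq_of_pos hn).symm⟩
  rw [hrec m t1, hrec m t2]
  set I1 := ∫ s in t1..T, f m s with hI1
  set I2 := ∫ s in t2..T, f m s with hI2
  have key : |(1 / Δ) * (-(σ21 * (σ11 - σ21)) - σ22 * (σ12 - σ22) +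
        (α1 - α2) * (Real.exp (-I1) - 1)) -
      (1 / Δ) * (-(σ21 * (σ11 - σ21)) - σ22 * (σ12 - σ22) +
        (α1 - α2) * (Real.exp (-I2) - 1))|
      = (α1 - α2) / Δ * |Real.exp (-I1) - Real.exp (-I2)| := by
    have : (1 / Δ) * (-(σ21 * (σ11 - σ21)) - σ22 * (σ12 - σ22) +
        (α1 - α2) * (Real.exp (-I1) - 1)) -
      (1 / Δ) * (-(σ21 * (σ11 - σ21)) - σ22 * (σ12 - σ22) +
        (α1 - α2) * (Real.exp (-I2) - 1))
        = ((α1 - α2) / Δ) * (Real.exp (-I1) - Real.exp (-I2)) := by ring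
    rw [this, abs_mul, abs_of_nonneg hcnn]
  rw [key]
  have hexp : |Real.exp (-I1) - Real.exp (-I2)| ≤ |I1 - I2| :=
    exp_neg_lip (hInonneg m t1 ht1) (hInonneg m t2 ht2)
  have hfc : Continuous (f m) := by
    apply Continuous.add <;> apply Continuous.pow <;>
      exact continuous_const.add ((hcont m).mul continuous_const)
  have hdiff : I1 - I2 = ∫ s in t1..t2, f m s := by
    have := intervalIntegral.integral_add_adjacent_intervals
      (hfc.intervalIntegrable (μ := MeasureTheory.volume) t1 t2) (hfc.intervalIntegrable (μ := MeasureTheory.volume) t2 T)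
    rw [hI1, hI2]; linarith
  have hIbound : |I1 - I2| ≤ B * |t2 - t1| := by
    rw [hdiff]
    have := intervalIntegral.norm_integral_le_of_norm_le_const (a := t1) (b := t2)
      (C := B) (f := f m) (fun x hx => by
        rw [Real.norm_eq_abs]
        apply hfbound m x
        have hsub : Set.uIoc t1 t2 ⊆ Set.Icc 0 T :=
          Set.Ioc_subset_Icc_self.trans (Set.uIcc_subset_Icc ht1 ht2)
        exact hsub hx)
    rwa [Real.norm_eq_abs] at this
  have habs : |t2 - t1| = |t1 - t2| := abs_sub_comm _ _
  have hc : (0:ℝ) ≤ (α1 - α2) / Δ := hcnn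
  calc (α1 - α2) / Δ * |Real.exp (-I1) - Real.exp (-I2)|
      ≤ (α1 - α2) / Δ * (B * |t1 - t2|) := by
        apply mul_le_mul_of_nonneg_left _ hc
        rw [← habs]; exact hexp.trans hIbound
    _ ≤ ((α1 - α2) / Δ * B + 1) * |t1 - t2| := by
        have := abs_nonneg (t1 - t2); nlinarith
end

section
/- Fix T > 0 and real parameters α1, α2, σ11, σ12, σ21, σ22 with Δ := (σ11−σ21)² + (σ12−σ22)² > 0. If k and l are two bounded continuous solutions on [0,T] of the integral equation for k1, then there exists a constant M2 ≥ 0 such that |k(t) − l(t)| ≤ M2·∫_t^T |k(s) − l(s)| ds for all t ∈ [0,T], and consequently k(t) = l(t) for all t ∈ [0,T]. -/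
private lemma exp_neg_lip' {x y : ℝ} (hx : 0 ≤ x) (hy : 0 ≤ y) :
    |Real.exp (-x) - Real.exp (-y)| ≤ |x - y| := by
  wlog h : y ≤ x generalizing x y
  · rw [abs_sub_comm, abs_sub_comm x y]; exact this hy hx (le_of_not_ge h)
  have h1 := Real.add_one_le_exp (y - x)
  have h3 : Real.exp (-y) ≤ 1 := Real.exp_le_one_iff.mpr (by linarith)
  have h4 : Real.exp (-x) = Real.exp (-y) * Real.exp (y - x) := by
    rw [← Real.exp_add]; ring_nf
  have h5 := Real.exp_pos (-y)
  rw [abs_of_nonpos (by nlinarith [Real.exp_le_exp.mpr (neg_le_neg h)]),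
    abs_of_nonneg (by linarith)]
  nlinarith

private lemma gronwall_int' {T M : ℝ} (hM : 0 ≤ M) (f : ℝ → ℝ) (hf : Continuous f)
    (hf0 : ∀ s, 0 ≤ f s) (hle : ∀ t ∈ Set.Icc (0:ℝ) T, f t ≤ M * ∫ s in t..T, f s) :
    ∀ t ∈ Set.Icc (0:ℝ) T, (∫ s in t..T, f s) = 0 := by
  set F : ℝ → ℝ := fun t => ∫ s in t..T, f s with hF
  have hFeq : F = fun t => (∫ s in (0:ℝ)..T, f s) - ∫ s in (0:ℝ)..t, f s := by
    funext t
    have := intervalIntegral.integral_add_adjacent_intervals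
      (μ := MeasureTheory.volume) (f := f)
      (hf.intervalIntegrable 0 t) (hf.intervalIntegrable t T)
    simp only [hF]; linarith
  have hFd : ∀ t, HasDerivAt F (-(f t)) t := by
    intro t
    have h1 : HasDerivAt (fun u => ∫ s in (0:ℝ)..u, f s) (f t) t :=
      intervalIntegral.integral_hasDerivAt_right (hf.intervalIntegrable 0 t)
        (hf.stronglyMeasurableAtFilter _ _) hf.continuousAt
    rw [hFeq]; exact h1.const_sub _
  set G : ℝ → ℝ := fun t => F t * Real.exp (M * t) with hG
  have hGd : ∀ t, HasDerivAt G ((-(f t)) * Real.exp (M * t) + F t * (Real.exp (M * t) * (M * 1))) t :=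
    fun t => (hFd t).mul (((hasDerivAt_id t).const_mul M).exp)
  have hGc : Continuous G := by
    apply continuous_iff_continuousAt.mpr
    exact fun x => (hGd x).continuousAt
  have hmono : MonotoneOn G (Set.Icc 0 T) := by
    apply monotoneOn_of_deriv_nonneg (convex_Icc 0 T) hGc.continuousOn
    · exact fun x _ => ((hGd x).differentiableAt).differentiableWithinAt
    · intro x hx
      rw [interior_Icc] at hx
      rw [(hGd x).deriv]
      have h1 := hle x (Set.mem_Icc_of_Ioo hx)
      have h2 := Real.exp_pos (M * x)
      have h3 : f x ≤ M * F x := h1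
      nlinarith
  intro t ht
  have hTmem : T ∈ Set.Icc (0:ℝ) T := Set.mem_Icc.mpr ⟨ht.1.trans ht.2, le_refl T⟩
  have hGt : G t ≤ G T := hmono ht hTmem ht.2
  have hFT : F T = 0 := by simp [hF]
  have hGT : G T = 0 := by rw [hG]; simp [hFT]
  have hFt0 : (0:ℝ) ≤ F t :=
    intervalIntegral.integral_nonneg ht.2 (fun s _ => hf0 s)
  have h2 := Real.exp_pos (M * t)
  have hle0 : F t ≤ 0 := by
    by_contra h
    push_neg at h
    have : 0 < G t := by rw [hG]; positivity
    linarith [hGt, hGT.symm ▸ this]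
  have : F t = 0 := le_antisymm hle0 hFt0
  simpa [hF] using this

private lemma k1_part1 (T α1 α2 σ11 σ12 σ21 σ22 : ℝ) (hT : 0 < T)
    (hΔ : 0 < (σ11 - σ21) ^ 2 + (σ12 - σ22) ^ 2)
    (k l : ℝ → ℝ)
    (hkc : ContinuousOn k (Set.Icc 0 T)) (hlc : ContinuousOn l (Set.Icc 0 T))
    {C : ℝ}
    (hCk : ∀ t ∈ Set.Icc (0 : ℝ) T, |k t| ≤ C)
    (hCl : ∀ t ∈ Set.Icc (0 : ℝ) T, |l t| ≤ C)
    (hk : ∀ t ∈ Set.Icc (0 : ℝ) T, k t = k1RHS T α1 α2 σ11 σ12 σ21 σ22 k t)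
    (hl : ∀ t ∈ Set.Icc (0 : ℝ) T, l t = k1RHS T α1 α2 σ11 σ12 σ21 σ22 l t)
    (t : ℝ) (ht : t ∈ Set.Icc (0:ℝ) T) :
    |k t - l t| ≤ ((1 / ((σ11 - σ21) ^ 2 + (σ12 - σ22) ^ 2)) * |α1 - α2| *
        (|2 * (σ21 * (σ11 - σ21) + σ22 * (σ12 - σ22))| +
          2 * ((σ11 - σ21) ^ 2 + (σ12 - σ22) ^ 2) * C)) *
      ∫ s in t..T, |k s - l s| := by
  have hC0 : 0 ≤ C := le_trans (abs_nonneg _) (hCk 0 (Set.mem_Icc.mpr ⟨le_refl 0, hT.le⟩))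
  set Δ := (σ11 - σ21) ^ 2 + (σ12 - σ22) ^ 2 with hΔdef
  set L := |2 * (σ21 * (σ11 - σ21) + σ22 * (σ12 - σ22))| + 2 * Δ * C with hLdef
  have hL0 : 0 ≤ L := by positivity
  set gk : ℝ → ℝ := fun s => (σ21 + k s * (σ11 - σ21)) ^ 2 + (σ22 + k s * (σ12 - σ22)) ^ 2 with hgk
  set gl : ℝ → ℝ := fun s => (σ21 + l s * (σ11 - σ21)) ^ 2 + (σ22 + l s * (σ12 - σ22)) ^ 2 with hgl
  have hgkc : ContinuousOn gk (Set.Icc 0 T) := by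
    apply ContinuousOn.add <;> apply ContinuousOn.pow <;>
      exact continuousOn_const.add (hkc.mul continuousOn_const)
  have hglc : ContinuousOn gl (Set.Icc 0 T) := by
    apply ContinuousOn.add <;> apply ContinuousOn.pow <;>
      exact continuousOn_const.add (hlc.mul continuousOn_const)
  have hsub : Set.uIcc t T ⊆ Set.Icc 0 T := by
    rw [Set.uIcc_of_le ht.2]; exact Set.Icc_subset_Icc ht.1 le_rfl
  have hgki : IntervalIntegrable gk MeasureTheory.volume t T :=
    (hgkc.mono hsub).intervalIntegrable
  have hgli : IntervalIntegrable gl MeasureTheory.volume t T :=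
    (hglc.mono hsub).intervalIntegrable
  set Ak := ∫ s in t..T, gk s with hAk
  set Al := ∫ s in t..T, gl s with hAl
  have hAk0 : 0 ≤ Ak := intervalIntegral.integral_nonneg ht.2 (fun s _ => by positivity)
  have hAl0 : 0 ≤ Al := intervalIntegral.integral_nonneg ht.2 (fun s _ => by positivity)
  have hdiff : k t - l t = (1 / Δ) * (α1 - α2) * (Real.exp (-Ak) - Real.exp (-Al)) := by
    rw [hk t ht, hl t ht]; unfold k1RHS; ring
  have habs : |k t - l t| = (1 / Δ) * |α1 - α2| * |Real.exp (-Ak) - Real.exp (-Al)| := by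
    rw [hdiff, abs_mul, abs_mul, abs_of_pos (by positivity : (0:ℝ) < 1 / Δ)]
  have hexp : |Real.exp (-Ak) - Real.exp (-Al)| ≤ |Ak - Al| := exp_neg_lip' hAk0 hAl0
  have hptw : ∀ s ∈ Set.Icc t T, |gk s - gl s| ≤ L * |k s - l s| := by
    intro s hs
    have hs' : s ∈ Set.Icc 0 T := ⟨ht.1.trans hs.1, hs.2⟩
    have hks := hCk s hs'
    have hls := hCl s hs'
    have heq : gk s - gl s =
        (k s - l s) * (2 * (σ21 * (σ11 - σ21) + σ22 * (σ12 - σ22)) + Δ * (k s + l s)) := by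
      simp only [hgk, hgl, hΔdef]; ring
    rw [heq, abs_mul, mul_comm L]
    apply mul_le_mul_of_nonneg_left _ (abs_nonneg _)
    calc |2 * (σ21 * (σ11 - σ21) + σ22 * (σ12 - σ22)) + Δ * (k s + l s)|
        ≤ |2 * (σ21 * (σ11 - σ21) + σ22 * (σ12 - σ22))| + |Δ * (k s + l s)| := abs_add_le _ _
      _ ≤ |2 * (σ21 * (σ11 - σ21) + σ22 * (σ12 - σ22))| + Δ * (|k s| + |l s|) := by
          have h6 : |Δ * (k s + l s)| ≤ Δ * (|k s| + |l s|) := by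
            rw [abs_mul, abs_of_pos hΔ]
            exact mul_le_mul_of_nonneg_left (abs_add_le _ _) hΔ.le
          linarith
      _ ≤ L := by
          rw [hLdef]
          have : |k s| + |l s| ≤ C + C := add_le_add hks hls
          nlinarith
  have hAbd : |Ak - Al| ≤ L * ∫ s in t..T, |k s - l s| := by
    have h1 : Ak - Al = ∫ s in t..T, (gk s - gl s) :=
      (intervalIntegral.integral_sub hgki hgli).symm
    rw [h1]
    calc |∫ s in t..T, (gk s - gl s)| ≤ ∫ s in t..T, |gk s - gl s| :=
          intervalIntegral.abs_integral_le_integral_abs ht.2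
      _ ≤ ∫ s in t..T, L * |k s - l s| := by
          apply intervalIntegral.integral_mono_on ht.2
          · exact (((hgkc.mono hsub).sub (hglc.mono hsub)).abs).intervalIntegrable
          · exact (continuousOn_const.mul (((hkc.mono hsub).sub (hlc.mono hsub)).abs)).intervalIntegrable
          · exact hptw
      _ = L * ∫ s in t..T, |k s - l s| := intervalIntegral.integral_const_mul _ _
  calc |k t - l t| = (1 / Δ) * |α1 - α2| * |Real.exp (-Ak) - Real.exp (-Al)| := habs
    _ ≤ (1 / Δ) * |α1 - α2| * (L * ∫ s in t..T, |k s - l s|) :=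
        mul_le_mul_of_nonneg_left (hexp.trans hAbd) (by positivity)
    _ = ((1 / Δ) * |α1 - α2| * L) * ∫ s in t..T, |k s - l s| := by ring
/-- Uniqueness via a Gronwall inequality: if `k` and `l` are two bounded continuous
solutions on `[0,T]` of the integral equation for `k1`, then there exists `M2 ≥ 0` with
`|k(t) − l(t)| ≤ M2·∫_t^T |k(s) − l(s)| ds` on `[0,T]`, and consequently `k = l` on `[0,T]`. -/
theorem k1_solutions_gronwall_unique
    (T α1 α2 σ11 σ12 σ21 σ22 : ℝ) (hT : 0 < T)
    (hΔ : 0 < (σ11 - σ21) ^ 2 + (σ12 - σ22) ^ 2)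
    (k l : ℝ → ℝ)
    (hkc : ContinuousOn k (Set.Icc 0 T)) (hlc : ContinuousOn l (Set.Icc 0 T))
    (hkb : ∃ C : ℝ, ∀ t ∈ Set.Icc (0 : ℝ) T, |k t| ≤ C)
    (hlb : ∃ C : ℝ, ∀ t ∈ Set.Icc (0 : ℝ) T, |l t| ≤ C)
    (hk : ∀ t ∈ Set.Icc (0 : ℝ) T, k t = k1RHS T α1 α2 σ11 σ12 σ21 σ22 k t)
    (hl : ∀ t ∈ Set.Icc (0 : ℝ) T, l t = k1RHS T α1 α2 σ11 σ12 σ21 σ22 l t) :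
    (∃ M2 : ℝ, 0 ≤ M2 ∧
      ∀ t ∈ Set.Icc (0 : ℝ) T, |k t - l t| ≤ M2 * ∫ s in t..T, |k s - l s|) ∧
    ∀ t ∈ Set.Icc (0 : ℝ) T, k t = l t := by
  obtain ⟨Ck, hCk⟩ := hkb
  obtain ⟨Cl, hCl⟩ := hlb
  set C := max Ck Cl with hC
  have hCk' : ∀ t ∈ Set.Icc (0:ℝ) T, |k t| ≤ C := fun t ht => (hCk t ht).trans (le_max_left _ _)
  have hCl' : ∀ t ∈ Set.Icc (0:ℝ) T, |l t| ≤ C := fun t ht => (hCl t ht).trans (le_max_right _ _)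
  have hC0 : 0 ≤ C := le_trans (abs_nonneg _) (hCk' 0 (Set.mem_Icc.mpr ⟨le_refl 0, hT.le⟩))
  set M2 := (1 / ((σ11 - σ21) ^ 2 + (σ12 - σ22) ^ 2)) * |α1 - α2| *
        (|2 * (σ21 * (σ11 - σ21) + σ22 * (σ12 - σ22))| +
          2 * ((σ11 - σ21) ^ 2 + (σ12 - σ22) ^ 2) * C) with hM2def
  have hM2 : 0 ≤ M2 := by positivity
  have hpart1 : ∀ t ∈ Set.Icc (0:ℝ) T, |k t - l t| ≤ M2 * ∫ s in t..T, |k s - l s| :=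
    fun t ht => k1_part1 T α1 α2 σ11 σ12 σ21 σ22 hT hΔ k l hkc hlc hCk' hCl' hk hl t ht
  refine ⟨⟨M2, hM2, hpart1⟩, ?_⟩
  -- Gronwall argument with an extension of |k - l| to all of ℝ
  set p : ℝ → ℝ := fun s => ((Set.projIcc (0:ℝ) T hT.le s : ℝ)) with hp
  set f : ℝ → ℝ := fun s => |k (p s) - l (p s)| with hf
  have hpc : Continuous p := continuous_subtype_val.comp continuous_projIcc
  have hpm : ∀ s, p s ∈ Set.Icc (0:ℝ) T := fun s => (Set.projIcc (0:ℝ) T hT.le s).2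
  have hfc : Continuous f := by
    have h1 : Continuous (fun s => k (p s)) := hkc.comp_continuous hpc hpm
    have h2 : Continuous (fun s => l (p s)) := hlc.comp_continuous hpc hpm
    exact (h1.sub h2).abs
  have hfeq : ∀ s ∈ Set.Icc (0:ℝ) T, f s = |k s - l s| := by
    intro s hs
    simp only [hf, hp, Set.projIcc_of_mem hT.le hs]
  have hint : ∀ t ∈ Set.Icc (0:ℝ) T, (∫ s in t..T, f s) = ∫ s in t..T, |k s - l s| := by
    intro t ht
    apply intervalIntegral.integral_congr
    intro s hs
    have hsub : Set.uIcc t T ⊆ Set.Icc 0 T := by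
      rw [Set.uIcc_of_le ht.2]; exact Set.Icc_subset_Icc ht.1 le_rfl
    exact hfeq s (hsub hs)
  have hzero : ∀ t ∈ Set.Icc (0:ℝ) T, (∫ s in t..T, f s) = 0 := by
    apply gronwall_int' hM2 f hfc (fun s => abs_nonneg _)
    intro t ht
    rw [hint t ht, hfeq t ht]
    exact hpart1 t ht
  intro t ht
  have h1 : (∫ s in t..T, |k s - l s|) = 0 := by rw [← hint t ht]; exact hzero t ht
  have h2 := hpart1 t ht
  rw [h1, mul_zero] at h2
  have := abs_nonneg (k t - l t)
  have h3 : |k t - l t| = 0 := le_antisymm h2 this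
  exact sub_eq_zero.mp (abs_eq_zero.mp h3)
end

section
/- Fix T > 0 and real parameters α1, α2, σ11, σ12, σ21, σ22 with Δ := (σ11−σ21)² + (σ12−σ22)² > 0. Let k1 be the unique continuous solution on [0,T] of the integral equation for k1 and let {k1^(n)} be its Picard iterates starting from k1^(0) ≡ 1. Then there exists a constant K > 0 such that for all n ≥ 1 and all t ∈ [0,T], |k1^(n)(t) − k1(t)| ≤ Σ_{i=n}^{∞} (1/i!)·K^{i+1}·(T−t)^{i}. -/
/-!
The right-hand side `Φ` of the equation is bounded uniformly in its argument, because
`exp (-I) ∈ (0, 1]` for the nonnegative integral `I`; so `k1` and all iterates stay in one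
bounded interval, on which the quadratic integrand is Lipschitz. As `exp ∘ neg` is 1-Lipschitz on
`[0, ∞)`, this gives `|Φ g t - Φ h t| ≤ C ∫_t^T |g - h|`, and iterating this Volterra-type
estimate from `|k⁽⁰⁾ - k1| ≤ K` yields `|k⁽ⁿ⁾ - k1| (t) ≤ Kⁿ⁺¹ (T - t)ⁿ / n!`, the first
term of the series.
-/

open Real Set intervalIntegral
open scoped Nat

theorem abs_exp_neg_sub_exp_neg_le {a b : ℝ} (ha : 0 ≤ a) (hb : 0 ≤ b) :
    |exp (-a) - exp (-b)| ≤ |a - b| := by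
  wlog hab : a ≤ b generalizing a b
  · rw [abs_sub_comm, abs_sub_comm a]
    exact this hb ha (le_of_not_ge hab)
  have h_exp_b : exp (-b) = exp (-a) * exp (a - b) := by rw [← exp_add]; ring_nf
  have h_tangent : a - b + 1 ≤ exp (a - b) := add_one_le_exp _
  have h_exp_a : exp (-a) ≤ 1 := exp_le_one_iff.mpr (neg_nonpos.mpr ha)
  have h_anti : exp (-b) ≤ exp (-a) := exp_le_exp.mpr (neg_le_neg hab)
  rw [abs_of_nonneg (sub_nonneg.mpr h_anti), abs_of_nonpos (sub_nonpos.mpr hab)]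
  nlinarith [exp_pos (-a)]

theorem integral_sub_pow_div_factorial (t T : ℝ) (n : ℕ) :
    ∫ s in t..T, (T - s) ^ n / n ! = (T - t) ^ (n + 1) / (n + 1)! := by
  rw [intervalIntegral.integral_div, intervalIntegral.integral_comp_sub_left (fun x => x ^ n),
    integral_pow, Nat.factorial_succ]
  push_cast
  field_simp
  ring

theorem le_pow_mul_sub_pow_div_factorial_of_le_integral {e : ℕ → ℝ → ℝ} {a T K : ℝ}
    (hK : 0 ≤ K) (he : ∀ n, ContinuousOn (e n) (Icc a T))
    (he0 : ∀ t ∈ Icc a T, e 0 t ≤ K)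
    (hsucc : ∀ n, ∀ t ∈ Icc a T, e (n + 1) t ≤ K * ∫ s in t..T, e n s) :
    ∀ n, ∀ t ∈ Icc a T, e n t ≤ K ^ (n + 1) * ((T - t) ^ n / n !) := by
  intro n
  induction n with
  | zero => simpa using he0
  | succ n ih =>
    intro t ht
    have hsub : Icc t T ⊆ Icc a T := Icc_subset_Icc_left ht.1
    have h_int : ∫ s in t..T, e n s ≤ ∫ s in t..T, K ^ (n + 1) * ((T - s) ^ n / n !) :=
      integral_mono_on ht.2 (((he n).mono hsub).intervalIntegrable_of_Icc ht.2)
        (by apply Continuous.intervalIntegrable; fun_prop) fun s hs => ih s (hsub hs)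
    calc e (n + 1) t ≤ K * ∫ s in t..T, e n s := hsucc n t ht
      _ ≤ K * ∫ s in t..T, K ^ (n + 1) * ((T - s) ^ n / n !) := by gcongr
      _ = K ^ (n + 2) * ((T - t) ^ (n + 1) / (n + 1)!) := by
        rw [intervalIntegral.integral_const_mul, integral_sub_pow_div_factorial]; ring

theorem pow_mul_pow_div_factorial_le_tsum {K x : ℝ} (hK : 0 ≤ K) (hx : 0 ≤ x) (n : ℕ) :
    K ^ (n + 1) * (x ^ n / n !) ≤
      ∑' i : ℕ, (1 / (((n + i).factorial : ℕ) : ℝ)) * K ^ (n + i + 1) * x ^ (n + i) := by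
  have hsum : Summable fun i : ℕ =>
      (1 / (((n + i).factorial : ℕ) : ℝ)) * K ^ (n + i + 1) * x ^ (n + i) := by
    refine (((Real.summable_pow_div_factorial (K * x)).comp_injective
      (add_right_injective n)).mul_left K).congr fun i => ?_
    simp only [Function.comp_apply, mul_pow, pow_succ]
    ring
  refine le_of_eq_of_le ?_ (hsum.le_tsum 0 fun i _ => by positivity)
  simp only [add_zero]
  ring

section IntegralEquation

variable (α1 α2 σ11 σ12 σ21 σ22 : ℝ)

noncomputable def k1Integrand (x : ℝ) : ℝ :=
  (σ21 + x * (σ11 - σ21)) ^ 2 + (σ22 + x * (σ12 - σ22)) ^ 2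

theorem k1RHS_eq (T : ℝ) (g : ℝ → ℝ) (t : ℝ) :
    k1RHS T α1 α2 σ11 σ12 σ21 σ22 g t =
      1 / ((σ11 - σ21) ^ 2 + (σ12 - σ22) ^ 2) *
        ((α1 - α2) * (exp (-∫ s in t..T, k1Integrand σ11 σ12 σ21 σ22 (g s)) - 1) -
          σ21 * (σ11 - σ21) - σ22 * (σ12 - σ22)) := rfl

theorem continuous_k1Integrand : Continuous (k1Integrand σ11 σ12 σ21 σ22) := by
  unfold k1Integrand; fun_prop

theorem exists_abs_k1Integrand_sub_le (R : ℝ) : ∃ L : ℝ, ∀ x y : ℝ, |x| ≤ R → |y| ≤ R →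
    |k1Integrand σ11 σ12 σ21 σ22 x - k1Integrand σ11 σ12 σ21 σ22 y| ≤ L * |x - y| := by
  have h_smooth : ContDiffOn ℝ 1 (k1Integrand σ11 σ12 σ21 σ22) (Icc (-R) R) := by
    unfold k1Integrand; fun_prop
  obtain ⟨L, hL⟩ := h_smooth.exists_lipschitzOnWith one_ne_zero (convex_Icc _ _) isCompact_Icc
  refine ⟨L, fun x y hx hy => ?_⟩
  simpa only [Real.dist_eq] using hL.dist_le_mul x (abs_le.mp hx) y (abs_le.mp hy)

noncomputable def k1RHSBound : ℝ :=
  (|α1 - α2| + |σ21 * (σ11 - σ21) + σ22 * (σ12 - σ22)|) / ((σ11 - σ21) ^ 2 + (σ12 - σ22) ^ 2)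

theorem k1RHSBound_nonneg : 0 ≤ k1RHSBound α1 α2 σ11 σ12 σ21 σ22 := by
  unfold k1RHSBound; positivity

theorem abs_k1RHS_le {t T : ℝ} (ht : t ≤ T) (g : ℝ → ℝ) :
    |k1RHS T α1 α2 σ11 σ12 σ21 σ22 g t| ≤ k1RHSBound α1 α2 σ11 σ12 σ21 σ22 := by
  set I := ∫ s in t..T, k1Integrand σ11 σ12 σ21 σ22 (g s)
  have hI : 0 ≤ I := integral_nonneg ht fun s _ => by unfold k1Integrand; positivity
  have hE : |exp (-I) - 1| ≤ 1 := by
    rw [abs_le]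
    constructor <;> linarith [exp_pos (-I), exp_le_one_iff.mpr (neg_nonpos.mpr hI)]
  rw [k1RHS_eq, abs_mul, abs_of_nonneg (by positivity), one_div_mul_eq_div, k1RHSBound]
  gcongr
  calc |(α1 - α2) * (exp (-I) - 1) - σ21 * (σ11 - σ21) - σ22 * (σ12 - σ22)|
      ≤ |(α1 - α2) * (exp (-I) - 1)| + |σ21 * (σ11 - σ21) + σ22 * (σ12 - σ22)| := by
        rw [sub_sub]; exact abs_sub _ _
    _ ≤ _ := by
        rw [abs_mul]; gcongr; exact mul_le_of_le_one_right (abs_nonneg _) hE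

theorem continuous_k1RHS (T : ℝ) {g : ℝ → ℝ} (hg : Continuous g) :
    Continuous (k1RHS T α1 α2 σ11 σ12 σ21 σ22 g) := by
  have hI : Continuous fun t => ∫ s in t..T, k1Integrand σ11 σ12 σ21 σ22 (g s) := by
    simp_rw [integral_symm T]
    exact (continuous_primitive (fun a b =>
      ((continuous_k1Integrand σ11 σ12 σ21 σ22).comp hg).intervalIntegrable a b) T).neg
  simp only [funext (k1RHS_eq α1 α2 σ11 σ12 σ21 σ22 T g)]
  fun_prop

theorem exists_abs_k1RHS_sub_le (T R : ℝ) : ∃ C : ℝ,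
    ∀ (g h : ℝ → ℝ) (t : ℝ), t ≤ T → ContinuousOn g (Icc t T) → ContinuousOn h (Icc t T) →
      (∀ s ∈ Icc t T, |g s| ≤ R) → (∀ s ∈ Icc t T, |h s| ≤ R) →
      |k1RHS T α1 α2 σ11 σ12 σ21 σ22 g t - k1RHS T α1 α2 σ11 σ12 σ21 σ22 h t| ≤
        C * ∫ s in t..T, |g s - h s| := by
  set F := k1Integrand σ11 σ12 σ21 σ22
  set Δ := (σ11 - σ21) ^ 2 + (σ12 - σ22) ^ 2
  obtain ⟨L, hLip⟩ := exists_abs_k1Integrand_sub_le σ11 σ12 σ21 σ22 R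
  refine ⟨|α1 - α2| / Δ * L, fun g h t ht hg hh hgR hhR => ?_⟩
  have h_int : ∀ f : ℝ → ℝ, ContinuousOn f (Icc t T) →
      IntervalIntegrable f MeasureTheory.volume t T :=
    fun f hf => hf.intervalIntegrable_of_Icc ht
  have hFg : ContinuousOn (fun s => F (g s)) (Icc t T) :=
    (continuous_k1Integrand σ11 σ12 σ21 σ22).comp_continuousOn hg
  have hFh : ContinuousOn (fun s => F (h s)) (Icc t T) :=
    (continuous_k1Integrand σ11 σ12 σ21 σ22).comp_continuousOn hh
  have h_diff : k1RHS T α1 α2 σ11 σ12 σ21 σ22 g t - k1RHS T α1 α2 σ11 σ12 σ21 σ22 h t =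
      (α1 - α2) / Δ * (exp (-∫ s in t..T, F (g s)) - exp (-∫ s in t..T, F (h s))) := by
    simp only [k1RHS_eq]; ring
  have h_nonneg : ∀ f : ℝ → ℝ, 0 ≤ ∫ s in t..T, F (f s) :=
    fun f => integral_nonneg ht fun s _ => by simp only [F, k1Integrand]; positivity
  calc |k1RHS T α1 α2 σ11 σ12 σ21 σ22 g t - k1RHS T α1 α2 σ11 σ12 σ21 σ22 h t|
      ≤ |α1 - α2| / Δ * |(∫ s in t..T, F (g s)) - ∫ s in t..T, F (h s)| := by
        rw [h_diff, abs_mul, abs_div, abs_of_nonneg (by positivity : 0 ≤ Δ)]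
        exact mul_le_mul_of_nonneg_left
          (abs_exp_neg_sub_exp_neg_le (h_nonneg g) (h_nonneg h)) (by positivity)
    _ ≤ |α1 - α2| / Δ * ∫ s in t..T, |F (g s) - F (h s)| := by
        rw [← integral_sub (h_int _ hFg) (h_int _ hFh)]
        gcongr
        exact abs_integral_le_integral_abs ht
    _ ≤ |α1 - α2| / Δ * ∫ s in t..T, L * |g s - h s| := by
        gcongr
        refine integral_mono_on ht (h_int _ (hFg.sub hFh).abs)
          (h_int _ ((hg.sub hh).abs.const_smul L)) fun s hs => hLip _ _ (hgR s hs) (hhR s hs)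
    _ = |α1 - α2| / Δ * L * ∫ s in t..T, |g s - h s| := by
        rw [integral_const_mul, mul_assoc]

section Iterates

variable {T : ℝ} {k : ℕ → ℝ → ℝ} (h0 : ∀ t, k 0 t = 1)
  (hrec : ∀ n t, k (n + 1) t = k1RHS T α1 α2 σ11 σ12 σ21 σ22 (k n) t)
include h0 hrec

theorem abs_picard_iterate_le (n : ℕ) {t : ℝ} (ht : t ≤ T) :
    |k n t| ≤ k1RHSBound α1 α2 σ11 σ12 σ21 σ22 + 1 := by
  cases n with
  | zero => simp [h0, k1RHSBound_nonneg]
  | succ n => linarith [hrec n t ▸ abs_k1RHS_le α1 α2 σ11 σ12 σ21 σ22 ht (k n)]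

theorem continuous_picard_iterate (n : ℕ) : Continuous (k n) := by
  induction n with
  | zero => simpa only [funext h0] using continuous_const
  | succ n ih =>
    simpa only [funext (hrec n)] using continuous_k1RHS α1 α2 σ11 σ12 σ21 σ22 T ih

end Iterates

end IntegralEquation

theorem picard_iterates_convergence_speed_general
    (T α1 α2 σ11 σ12 σ21 σ22 : ℝ)
    (k1 : ℝ → ℝ)
    (hk1c : ContinuousOn k1 (Set.Icc 0 T))
    (hk1 : ∀ t ∈ Set.Icc (0 : ℝ) T, k1 t = k1RHS T α1 α2 σ11 σ12 σ21 σ22 k1 t)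
    (k : ℕ → ℝ → ℝ)
    (h0 : ∀ t : ℝ, k 0 t = 1)
    (hrec : ∀ (n : ℕ) (t : ℝ), k (n + 1) t = k1RHS T α1 α2 σ11 σ12 σ21 σ22 (k n) t) :
    ∃ K : ℝ, 0 < K ∧
      ∀ n : ℕ, 1 ≤ n → ∀ t ∈ Set.Icc (0 : ℝ) T,
        |k n t - k1 t| ≤
          ∑' i : ℕ,
            (1 / (((n + i).factorial : ℕ) : ℝ)) * K ^ (n + i + 1) * (T - t) ^ (n + i) := by
  set M := k1RHSBound α1 α2 σ11 σ12 σ21 σ22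
  have hk1_bound : ∀ t ∈ Icc 0 T, |k1 t| ≤ M := fun t ht =>
    (hk1 t ht).symm ▸ abs_k1RHS_le α1 α2 σ11 σ12 σ21 σ22 ht.2 k1
  have hk_bound n t (ht : t ∈ Icc 0 T) := abs_picard_iterate_le α1 α2 σ11 σ12 σ21 σ22 h0 hrec n ht.2
  have hk_cont := continuous_picard_iterate α1 α2 σ11 σ12 σ21 σ22 h0 hrec
  obtain ⟨C, hC⟩ := exists_abs_k1RHS_sub_le α1 α2 σ11 σ12 σ21 σ22 T (M + 1)
  set K := max (M + 1) C
  have hK : 0 < K := lt_max_of_lt_left (by linarith [k1RHSBound_nonneg α1 α2 σ11 σ12 σ21 σ22])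
  have h_error :=
    le_pow_mul_sub_pow_div_factorial_of_le_integral (e := fun n t => |k n t - k1 t|) hK.le
      (fun n => ((hk_cont n).continuousOn.sub hk1c).abs) ?_ ?_
  · exact ⟨K, hK, fun n _ t ht => (h_error n t ht).trans
      (pow_mul_pow_div_factorial_le_tsum hK.le (sub_nonneg.2 ht.2) n)⟩
  · intro t ht
    rw [h0]
    linarith [abs_sub 1 (k1 t), abs_one (α := ℝ), hk1_bound t ht, le_max_left (M + 1) C]
  · intro n t ht
    have hsub : Icc t T ⊆ Icc 0 T := Icc_subset_Icc_left ht.1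
    rw [hrec, hk1 t ht]
    calc _ ≤ C * ∫ s in t..T, |k n s - k1 s| :=
          hC (k n) k1 t ht.2 (hk_cont n).continuousOn (hk1c.mono hsub)
            (fun s hs => hk_bound n s (hsub hs)) (fun s hs => by linarith [hk1_bound s (hsub hs)])
      _ ≤ K * ∫ s in t..T, |k n s - k1 s| :=
        mul_le_mul_of_nonneg_right (le_max_right _ _) (integral_nonneg ht.2 fun _ _ => abs_nonneg _)

/-- Convergence speed of the Picard iterates for the integral equation for `k1`: with
`k1⁽⁰⁾ ≡ 1`, there exists `K > 0` such that for all `n ≥ 1` and `t ∈ [0,T]`,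
`|k1⁽ⁿ⁾(t) − k1(t)| ≤ Σ_{i=n}^∞ (1/i!)·K^{i+1}·(T−t)^i`. -/
theorem picard_iterates_convergence_speed
    (T α1 α2 σ11 σ12 σ21 σ22 : ℝ) (hT : 0 < T)
    (hΔ : 0 < (σ11 - σ21) ^ 2 + (σ12 - σ22) ^ 2)
    (k1 : ℝ → ℝ)
    (hk1c : ContinuousOn k1 (Set.Icc 0 T))
    (hk1 : ∀ t ∈ Set.Icc (0 : ℝ) T, k1 t = k1RHS T α1 α2 σ11 σ12 σ21 σ22 k1 t)
    (hk1uniq : ∀ l : ℝ → ℝ, ContinuousOn l (Set.Icc 0 T) →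
      (∀ t ∈ Set.Icc (0 : ℝ) T, l t = k1RHS T α1 α2 σ11 σ12 σ21 σ22 l t) →
      Set.EqOn l k1 (Set.Icc 0 T))
    (k : ℕ → ℝ → ℝ)
    (h0 : ∀ t : ℝ, k 0 t = 1)
    (hrec : ∀ (n : ℕ) (t : ℝ), k (n + 1) t = k1RHS T α1 α2 σ11 σ12 σ21 σ22 (k n) t) :
    ∃ K : ℝ, 0 < K ∧
      ∀ n : ℕ, 1 ≤ n → ∀ t ∈ Set.Icc (0 : ℝ) T,
        |k n t - k1 t| ≤
          ∑' i : ℕ,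
            (1 / (((n + i).factorial : ℕ) : ℝ)) * K ^ (n + i + 1) * (T - t) ^ (n + i) :=
  picard_iterates_convergence_speed_general T α1 α2 σ11 σ12 σ21 σ22 k1 hk1c hk1 k h0 hrec
end

section
/- Fix T > 0 and real parameters α1, α2, σ11, σ12, σ21, σ22 with Δ := (σ11−σ21)² + (σ12−σ22)² > 0, and let k1 : [0,T] → ℝ be a continuous solution of the integral equation for k1. Then k1 is continuously differentiable on [0,T] and for all t ∈ [0,T], (d/dt) k1(t) = ((α1−α2)/Δ)·[ (σ21 + k1(t)(σ11−σ21))² + (σ22 + k1(t)(σ12−σ22))² ]·exp( −∫_t^T [ (σ21 + k1(s)(σ11−σ21))² + (σ22 + k1(s)(σ12−σ22))² ] ds ). Consequently, if α1 ≥ α2 then k1 is nondecreasing on [0,T], and if α1 ≤ α2 then k1 is nonincreasing on [0,T]. -/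
/-- The candidate derivative of a solution `k1` of the integral equation. -/
noncomputable def k1Deriv (T α1 α2 σ11 σ12 σ21 σ22 : ℝ) (k1 : ℝ → ℝ) (t : ℝ) : ℝ :=
  ((α1 - α2) / ((σ11 - σ21) ^ 2 + (σ12 - σ22) ^ 2)) *
    ((σ21 + k1 t * (σ11 - σ21)) ^ 2 + (σ22 + k1 t * (σ12 - σ22)) ^ 2) *
    Real.exp
      (-∫ s in t..T,
          ((σ21 + k1 s * (σ11 - σ21)) ^ 2 + (σ22 + k1 s * (σ12 - σ22)) ^ 2))

/-- A continuous solution `k1` of the integral equation for `k1` is continuously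
differentiable on `[0,T]` with the stated derivative; consequently `k1` is nondecreasing
if `α1 ≥ α2` and nonincreasing if `α1 ≤ α2`. -/
theorem k1_solution_differentiable_and_monotone
    (T α1 α2 σ11 σ12 σ21 σ22 : ℝ) (hT : 0 < T)
    (hΔ : 0 < (σ11 - σ21) ^ 2 + (σ12 - σ22) ^ 2)
    (k1 : ℝ → ℝ)
    (hk1c : ContinuousOn k1 (Set.Icc 0 T))
    (hk1 : ∀ t ∈ Set.Icc (0 : ℝ) T, k1 t = k1RHS T α1 α2 σ11 σ12 σ21 σ22 k1 t) :
    (∀ t ∈ Set.Icc (0 : ℝ) T,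
        HasDerivWithinAt k1 (k1Deriv T α1 α2 σ11 σ12 σ21 σ22 k1 t) (Set.Icc 0 T) t) ∧
    ContinuousOn (k1Deriv T α1 α2 σ11 σ12 σ21 σ22 k1) (Set.Icc 0 T) ∧
    (α2 ≤ α1 → MonotoneOn k1 (Set.Icc 0 T)) ∧
    (α1 ≤ α2 → AntitoneOn k1 (Set.Icc 0 T)) := by
  set g : ℝ → ℝ := fun s =>
    (σ21 + k1 s * (σ11 - σ21)) ^ 2 + (σ22 + k1 s * (σ12 - σ22)) ^ 2 with hg_def
  have hg : ContinuousOn g (Set.Icc 0 T) := by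
    apply ContinuousOn.add
    · exact (continuousOn_const.add (hk1c.mul continuousOn_const)).pow 2
    · exact (continuousOn_const.add (hk1c.mul continuousOn_const)).pow 2
  have hgnn : ∀ s, 0 ≤ g s := fun s => add_nonneg (sq_nonneg _) (sq_nonneg _)
  set F : ℝ → ℝ := fun t => ∫ s in t..T, g s with hF_def
  have hF : ∀ t ∈ Set.Icc (0 : ℝ) T, HasDerivWithinAt F (-(g t)) (Set.Icc 0 T) t := by
    intro t ht
    haveI : Fact (t ∈ Set.Icc (0:ℝ) T) := ⟨ht⟩
    exact intervalIntegral.integral_hasDerivWithinAt_left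
      ((hg.mono (by rw [Set.uIcc_of_le ht.2]; exact Set.Icc_subset_Icc_left ht.1)).intervalIntegrable)
      (hg.stronglyMeasurableAtFilter_nhdsWithin measurableSet_Icc t)
      (hg t ht)
  have hderiv : ∀ t ∈ Set.Icc (0 : ℝ) T,
      HasDerivWithinAt k1 (k1Deriv T α1 α2 σ11 σ12 σ21 σ22 k1 t) (Set.Icc 0 T) t := by
    intro t ht
    have hE : HasDerivWithinAt (fun u => Real.exp (-(F u)))
        (Real.exp (-(F t)) * g t) (Set.Icc 0 T) t := by
      have := ((hF t ht).neg).exp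
      simpa using this
    have hR : HasDerivWithinAt (fun u => k1RHS T α1 α2 σ11 σ12 σ21 σ22 k1 u)
        ((1 / ((σ11 - σ21) ^ 2 + (σ12 - σ22) ^ 2)) *
          ((α1 - α2) * (Real.exp (-(F t)) * g t))) (Set.Icc 0 T) t := by
      have : HasDerivWithinAt
          (fun u => (1 / ((σ11 - σ21) ^ 2 + (σ12 - σ22) ^ 2)) *
            ((α1 - α2) * (Real.exp (-(F u)) - 1) -
              σ21 * (σ11 - σ21) - σ22 * (σ12 - σ22)))
          ((1 / ((σ11 - σ21) ^ 2 + (σ12 - σ22) ^ 2)) *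
            ((α1 - α2) * (Real.exp (-(F t)) * g t))) (Set.Icc 0 T) t := by
        exact (((hE.sub_const 1).const_mul (α1 - α2)).sub_const
          (σ21 * (σ11 - σ21))).sub_const (σ22 * (σ12 - σ22)) |>.const_mul _
      exact this
    have hk : HasDerivWithinAt k1
        ((1 / ((σ11 - σ21) ^ 2 + (σ12 - σ22) ^ 2)) *
          ((α1 - α2) * (Real.exp (-(F t)) * g t))) (Set.Icc 0 T) t :=
      hR.congr (fun x hx => hk1 x hx) (hk1 t ht)
    have : k1Deriv T α1 α2 σ11 σ12 σ21 σ22 k1 t =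
        (1 / ((σ11 - σ21) ^ 2 + (σ12 - σ22) ^ 2)) *
          ((α1 - α2) * (Real.exp (-(F t)) * g t)) := by
      simp only [k1Deriv, hF_def, hg_def]
      ring
    rw [this]
    exact hk
  have hFc : ContinuousOn F (Set.Icc 0 T) := fun t ht => (hF t ht).continuousWithinAt
  have hDc : ContinuousOn (k1Deriv T α1 α2 σ11 σ12 σ21 σ22 k1) (Set.Icc 0 T) := by
    have : ContinuousOn (fun t => ((α1 - α2) / ((σ11 - σ21) ^ 2 + (σ12 - σ22) ^ 2)) *
        g t * Real.exp (-(F t))) (Set.Icc 0 T) :=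
      (continuousOn_const.mul hg).mul (Real.continuous_exp.comp_continuousOn hFc.neg)
    exact this
  have hsign : ∀ t ∈ Set.Icc (0 : ℝ) T,
      k1Deriv T α1 α2 σ11 σ12 σ21 σ22 k1 t =
        ((α1 - α2) / ((σ11 - σ21) ^ 2 + (σ12 - σ22) ^ 2)) * g t * Real.exp (-(F t)) := by
    intro t ht; rfl
  have hderiv_eq : ∀ x ∈ interior (Set.Icc (0:ℝ) T),
      deriv k1 x = k1Deriv T α1 α2 σ11 σ12 σ21 σ22 k1 x := by
    intro x hx
    have hx' : x ∈ Set.Icc (0:ℝ) T := interior_subset hx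
    have hmem : Set.Icc (0:ℝ) T ∈ nhds x := mem_interior_iff_mem_nhds.mp hx
    exact ((hderiv x hx').hasDerivAt hmem).deriv
  have hdiff : DifferentiableOn ℝ k1 (interior (Set.Icc (0:ℝ) T)) := by
    intro x hx
    have hx' : x ∈ Set.Icc (0:ℝ) T := interior_subset hx
    have hmem : Set.Icc (0:ℝ) T ∈ nhds x := mem_interior_iff_mem_nhds.mp hx
    exact (((hderiv x hx').hasDerivAt hmem).differentiableAt).differentiableWithinAt
  refine ⟨hderiv, hDc, ?_, ?_⟩
  · intro hα
    apply monotoneOn_of_deriv_nonneg (convex_Icc 0 T) hk1c hdiff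
    intro x hx
    rw [hderiv_eq x hx, hsign x (interior_subset hx)]
    have : 0 ≤ (α1 - α2) / ((σ11 - σ21) ^ 2 + (σ12 - σ22) ^ 2) :=
      div_nonneg (by linarith) hΔ.le
    positivity
  · intro hα
    apply antitoneOn_of_deriv_nonpos (convex_Icc 0 T) hk1c hdiff
    intro x hx
    rw [hderiv_eq x hx, hsign x (interior_subset hx)]
    apply mul_nonpos_of_nonpos_of_nonneg _ (Real.exp_pos _).le
    apply mul_nonpos_of_nonpos_of_nonneg _ (hgnn x)
    exact div_nonpos_of_nonpos_of_nonneg (by linarith) hΔ.le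
end

section
/- Fix T > 0, σ > 0 and real parameters α1, α2, and set σ11 = σ22 = σ and σ12 = σ21 = 0. Let k : [0,T] → ℝ be the unique continuous solution of the equation k(t) = ((α1−α2)/(2σ²))·( exp( −∫_t^T σ²·(2k(s)² − 2k(s) + 1) ds ) − 1 ) + 1/2. Then k(T) = 1/2; if α1 > α2 then k(t) < 1/2 for all t ∈ [0,T); if α1 < α2 then k(t) > 1/2 for all t ∈ [0,T); and if α1 = α2 then k(t) = 1/2 for all t ∈ [0,T]. -/
/-- For two uncorrelated stocks with equal volatility `σ > 0`, the solution `k` of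
`k(t) = ((α1−α2)/(2σ²))·(exp(−∫_t^T σ²·(2k(s)² − 2k(s) + 1) ds) − 1) + 1/2`
satisfies `k(T) = 1/2`; `k(t) < 1/2` on `[0,T)` if `α1 > α2`; `k(t) > 1/2` on `[0,T)` if
`α1 < α2`; and `k ≡ 1/2` on `[0,T]` if `α1 = α2`. -/
theorem equal_volatility_half_split
    (T σ α1 α2 : ℝ) (hT : 0 < T) (hσ : 0 < σ)
    (k : ℝ → ℝ)
    (hkc : ContinuousOn k (Set.Icc 0 T))
    (hk : ∀ t ∈ Set.Icc (0 : ℝ) T,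
      k t =
        ((α1 - α2) / (2 * σ ^ 2)) *
            (Real.exp (-∫ s in t..T, σ ^ 2 * (2 * (k s) ^ 2 - 2 * k s + 1)) - 1) +
          1 / 2)
    (hkuniq : ∀ l : ℝ → ℝ, ContinuousOn l (Set.Icc 0 T) →
      (∀ t ∈ Set.Icc (0 : ℝ) T,
        l t =
          ((α1 - α2) / (2 * σ ^ 2)) *
              (Real.exp (-∫ s in t..T, σ ^ 2 * (2 * (l s) ^ 2 - 2 * l s + 1)) - 1) +
            1 / 2) →
      Set.EqOn l k (Set.Icc 0 T)) :
    k T = 1 / 2 ∧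
    (α2 < α1 → ∀ t ∈ Set.Ico (0 : ℝ) T, k t < 1 / 2) ∧
    (α1 < α2 → ∀ t ∈ Set.Ico (0 : ℝ) T, 1 / 2 < k t) ∧
    (α1 = α2 → ∀ t ∈ Set.Icc (0 : ℝ) T, k t = 1 / 2) := by

  set f : ℝ → ℝ := fun s => σ ^ 2 * (2 * (k s) ^ 2 - 2 * k s + 1) with hf
  have hfc : ContinuousOn f (Set.Icc 0 T) := by
    apply ContinuousOn.mul continuousOn_const
    exact (((continuousOn_const.mul ((hkc.pow 2))).sub
      (continuousOn_const.mul hkc)).add continuousOn_const)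
  have hIpos : ∀ t ∈ Set.Ico (0 : ℝ) T,
      0 < ∫ s in t..T, f s := by
    intro t ht
    have htT : t ≤ T := le_of_lt ht.2
    have hsub : Set.uIcc t T ⊆ Set.Icc 0 T := by
      rw [Set.uIcc_of_le htT]
      exact Set.Icc_subset_Icc ht.1 le_rfl
    have hint : IntervalIntegrable f MeasureTheory.volume t T :=
      (hfc.mono hsub).intervalIntegrable
    have hconst : IntervalIntegrable (fun _ : ℝ => σ ^ 2 / 2)
        MeasureTheory.volume t T := intervalIntegrable_const
    have hmono : (∫ s in t..T, (σ ^ 2 / 2 : ℝ)) ≤ ∫ s in t..T, f s := by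
      apply intervalIntegral.integral_mono_on htT hconst hint
      intro s hs
      have : 2 * (k s) ^ 2 - 2 * k s + 1 = 2 * (k s - 1 / 2) ^ 2 + 1 / 2 := by ring
      have h1 : (1 / 2 : ℝ) ≤ 2 * (k s) ^ 2 - 2 * k s + 1 := by
        rw [this]; nlinarith [sq_nonneg (k s - 1 / 2)]
      have hσ2 : (0 : ℝ) < σ ^ 2 := by positivity
      calc σ ^ 2 / 2 = σ ^ 2 * (1 / 2) := by ring
        _ ≤ f s := by exact mul_le_mul_of_nonneg_left h1 (le_of_lt hσ2)
    have : (0 : ℝ) < ∫ s in t..T, (σ ^ 2 / 2 : ℝ) := by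
      rw [intervalIntegral.integral_const, smul_eq_mul]
      have : 0 < T - t := sub_pos.mpr ht.2
      positivity
    linarith
  have hkT : k T = 1 / 2 := by
    have := hk T (Set.mem_Icc.mpr ⟨le_of_lt hT, le_rfl⟩)
    simpa [intervalIntegral.integral_same] using this
  refine ⟨hkT, ?_, ?_, ?_⟩
  · intro hα t ht
    have htI : t ∈ Set.Icc (0 : ℝ) T := ⟨ht.1, le_of_lt ht.2⟩
    have hI := hIpos t ht
    have hexp : Real.exp (-∫ s in t..T, f s) < 1 := by
      rw [Real.exp_lt_one_iff]; linarith
    have hc : 0 < (α1 - α2) / (2 * σ ^ 2) := by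
      apply div_pos (by linarith); positivity
    have := hk t htI
    rw [this]
    have : (α1 - α2) / (2 * σ ^ 2) * (Real.exp (-∫ s in t..T, f s) - 1) < 0 :=
      mul_neg_of_pos_of_neg hc (by linarith)
    linarith
  · intro hα t ht
    have htI : t ∈ Set.Icc (0 : ℝ) T := ⟨ht.1, le_of_lt ht.2⟩
    have hI := hIpos t ht
    have hexp : Real.exp (-∫ s in t..T, f s) < 1 := by
      rw [Real.exp_lt_one_iff]; linarith
    have hc : (α1 - α2) / (2 * σ ^ 2) < 0 := by
      apply div_neg_of_neg_of_pos (by linarith); positivity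
    have := hk t htI
    rw [this]
    have : 0 < (α1 - α2) / (2 * σ ^ 2) * (Real.exp (-∫ s in t..T, f s) - 1) :=
      mul_pos_of_neg_of_neg hc (by linarith)
    linarith
  · intro hα t ht
    have := hk t ht
    rw [this, hα]
    simp
end

section
/- Fix T > 0 and real parameters α1, α2, σ11, σ12, σ21, σ22 with Δ := (σ11−σ21)² + (σ12−σ22)² > 0, and let k1 be the unique continuous solution of the integral equation for k1. For each γ > 0 let k2(·; γ) denote the unique continuous solution of the integral equation for k2 associated with k1 and γ. Then k2(t; γ) = (1/γ)·k2(t; 1) for all t ∈ [0,T] and all γ > 0; in particular k2(·; γ) converges to 0 uniformly on [0,T] as γ → ∞. -/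
/-- `I1(t,v) = exp(−∫_t^v {α2 + k1(s)(α1−α2)} ds)`. -/
noncomputable def volI1 (α1 α2 : ℝ) (k1 : ℝ → ℝ) (t v : ℝ) : ℝ :=
  Real.exp (-∫ s in t..v, (α2 + k1 s * (α1 - α2)))

/-- `I2(t,v) = exp(−∫_t^v [(σ21 + k1(s)(σ11−σ21))² + (σ22 + k1(s)(σ12−σ22))²] ds)`. -/
noncomputable def volI2 (σ11 σ12 σ21 σ22 : ℝ) (k1 : ℝ → ℝ) (t v : ℝ) : ℝ :=
  Real.exp
    (-∫ s in t..v,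
        ((σ21 + k1 s * (σ11 - σ21)) ^ 2 + (σ22 + k1 s * (σ12 - σ22)) ^ 2))

/-- `I3(t,v)` as in the paper. -/
noncomputable def volI3 (T α1 α2 σ11 σ12 σ21 σ22 : ℝ) (k1 : ℝ → ℝ) (t v : ℝ) : ℝ :=
  (α1 - α2) * volI2 σ11 σ12 σ21 σ22 k1 t T -
    ((α1 - α2) + (σ11 - σ21) * (σ21 + k1 v * (σ11 - σ21)) +
        (σ12 - σ22) * (σ22 + k1 v * (σ12 - σ22))) *
      volI2 σ11 σ12 σ21 σ22 k1 t v

/-- The right-hand side of the integral equation for `k2` associated with `k1` and `γ`. -/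
noncomputable def k2RHS (T γ α1 α2 σ11 σ12 σ21 σ22 : ℝ) (k1 k2 : ℝ → ℝ) (t : ℝ) : ℝ :=
  ((α1 - α2) / ((σ11 - σ21) ^ 2 + (σ12 - σ22) ^ 2)) *
    ((1 / γ) * volI1 α1 α2 k1 t T * volI2 σ11 σ12 σ21 σ22 k1 t T +
      ∫ v in t..T,
        volI1 α1 α2 k1 t v * volI3 T α1 α2 σ11 σ12 σ21 σ22 k1 t v * k2 v)

/-- Scaling of `k2` in the risk aversion `γ`: the solution `k2(·;γ)` of the integral
equation for `k2` satisfies `k2(t;γ) = (1/γ)·k2(t;1)`, hence `k2(·;γ) → 0` uniformly on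
`[0,T]` as `γ → ∞`. -/
theorem k2_scaling_in_gamma
    (T α1 α2 σ11 σ12 σ21 σ22 : ℝ) (hT : 0 < T)
    (hΔ : 0 < (σ11 - σ21) ^ 2 + (σ12 - σ22) ^ 2)
    (k1 : ℝ → ℝ)
    (hk1c : ContinuousOn k1 (Set.Icc 0 T))
    (hk1 : ∀ t ∈ Set.Icc (0 : ℝ) T, k1 t = k1RHS T α1 α2 σ11 σ12 σ21 σ22 k1 t)
    (hk1uniq : ∀ l : ℝ → ℝ, ContinuousOn l (Set.Icc 0 T) →
      (∀ t ∈ Set.Icc (0 : ℝ) T, l t = k1RHS T α1 α2 σ11 σ12 σ21 σ22 l t) →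
      Set.EqOn l k1 (Set.Icc 0 T))
    (k2 : ℝ → ℝ → ℝ)
    (hk2c : ∀ γ : ℝ, 0 < γ → ContinuousOn (k2 γ) (Set.Icc 0 T))
    (hk2 : ∀ γ : ℝ, 0 < γ → ∀ t ∈ Set.Icc (0 : ℝ) T,
      k2 γ t = k2RHS T γ α1 α2 σ11 σ12 σ21 σ22 k1 (k2 γ) t)
    (hk2uniq : ∀ γ : ℝ, 0 < γ → ∀ m : ℝ → ℝ, ContinuousOn m (Set.Icc 0 T) →
      (∀ t ∈ Set.Icc (0 : ℝ) T, m t = k2RHS T γ α1 α2 σ11 σ12 σ21 σ22 k1 m t) →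
      Set.EqOn m (k2 γ) (Set.Icc 0 T)) :
    (∀ γ : ℝ, 0 < γ → ∀ t ∈ Set.Icc (0 : ℝ) T, k2 γ t = (1 / γ) * k2 1 t) ∧
    TendstoUniformlyOn k2 (fun _ => 0) Filter.atTop (Set.Icc 0 T) := by
  have key : ∀ γ : ℝ, 0 < γ → ∀ t ∈ Set.Icc (0 : ℝ) T, k2 γ t = (1 / γ) * k2 1 t := by
    intro γ hγ t ht
    have hm : ∀ t ∈ Set.Icc (0 : ℝ) T,
        (fun t => (1 / γ) * k2 1 t) t = k2RHS T γ α1 α2 σ11 σ12 σ21 σ22 k1 (fun t => (1 / γ) * k2 1 t) t := by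
      intro t ht
      have h1 := hk2 1 one_pos t ht
      simp only [k2RHS] at h1 ⊢
      have hint : (∫ v in t..T,
          volI1 α1 α2 k1 t v * volI3 T α1 α2 σ11 σ12 σ21 σ22 k1 t v * (1 / γ * k2 1 v))
          = (1 / γ) * ∫ v in t..T,
          volI1 α1 α2 k1 t v * volI3 T α1 α2 σ11 σ12 σ21 σ22 k1 t v * k2 1 v := by
        rw [← intervalIntegral.integral_const_mul]
        congr 1; funext v; ring
      rw [hint, h1]; ring
    have hmc : ContinuousOn (fun t => (1 / γ) * k2 1 t) (Set.Icc 0 T) :=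
      (continuousOn_const).mul (hk2c 1 one_pos)
    exact ((hk2uniq γ hγ _ hmc hm) ht).symm
  refine ⟨key, ?_⟩
  obtain ⟨C, hC⟩ := isCompact_Icc.exists_bound_of_continuousOn (hk2c 1 one_pos)
  have hC0 : 0 ≤ C := by
    rcases Set.nonempty_Icc.mpr hT.le with ⟨x, hx⟩
    exact le_trans (norm_nonneg _) (hC x hx)
  rw [Metric.tendstoUniformlyOn_iff]
  intro ε hε
  filter_upwards [Filter.eventually_ge_atTop (max 1 ((C + 1) / ε))] with γ hγ
  intro x hx
  have h1 : (1 : ℝ) ≤ γ := le_trans (le_max_left _ _) hγ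
  have hγ0 : 0 < γ := lt_of_lt_of_le one_pos h1
  rw [key γ hγ0 x hx]
  have hCx : |k2 1 x| ≤ C := hC x hx
  have hdist : dist (0 : ℝ) (1 / γ * k2 1 x) = |k2 1 x| / γ := by
    rw [Real.dist_eq, zero_sub, abs_neg, abs_mul,
      abs_of_pos (by positivity : (0:ℝ) < 1 / γ)]
    ring
  rw [hdist]
  have h2 : (C + 1) / ε ≤ γ := le_trans (le_max_right _ _) hγ
  have hlt : C / γ < ε := by
    rw [div_lt_iff₀ hγ0]
    have : C + 1 ≤ γ * ε := (div_le_iff₀ hε).mp h2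
    linarith
  calc |k2 1 x| / γ ≤ C / γ := by gcongr
    _ < ε := hlt
end

section
/- Fix T > 0 and real parameters with α1 = α2, σ12 = σ22 = 0, σ11 > 0, σ21 > 0 and σ11 ≠ σ21 (so Δ = (σ11−σ21)² > 0). Then the unique continuous solution of the integral equation for k1 is the constant function k1(t) ≡ σ21/(σ21 − σ11); moreover, if σ11 < σ21 then k1(t) > 1 for all t ∈ [0,T] (long stock 1, short stock 2), and if σ11 > σ21 then k1(t) < 0 for all t ∈ [0,T] (short stock 1, long stock 2). -/
lemma k1RHS_const (T α σ11 σ21 : ℝ) (hne : σ11 ≠ σ21) (k : ℝ → ℝ) (t : ℝ) :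
    k1RHS T α α σ11 0 σ21 0 k t = σ21 / (σ21 - σ11) := by
  have h : σ11 - σ21 ≠ 0 := sub_ne_zero.mpr hne
  have h' : σ21 - σ11 ≠ 0 := sub_ne_zero.mpr (Ne.symm hne)
  unfold k1RHS
  field_simp
  ring

/-- With `α1 = α2`, `σ12 = σ22 = 0`, `σ11, σ21 > 0` and `σ11 ≠ σ21`, the unique continuous
solution of the integral equation for `k1` is the constant `σ21/(σ21 − σ11)`; it exceeds
`1` when `σ11 < σ21` (long stock 1, short stock 2) and is negative when `σ11 > σ21`
(short stock 1, long stock 2). -/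
theorem equal_alphas_one_brownian_constant_solution
    (T α1 α2 σ11 σ21 : ℝ) (hT : 0 < T) (hα : α1 = α2)
    (hσ11 : 0 < σ11) (hσ21 : 0 < σ21) (hne : σ11 ≠ σ21) :
    ((∀ t ∈ Set.Icc (0 : ℝ) T,
        (fun _ : ℝ => σ21 / (σ21 - σ11)) t =
          k1RHS T α1 α2 σ11 0 σ21 0 (fun _ : ℝ => σ21 / (σ21 - σ11)) t) ∧
      ∀ l : ℝ → ℝ, ContinuousOn l (Set.Icc 0 T) →
        (∀ t ∈ Set.Icc (0 : ℝ) T, l t = k1RHS T α1 α2 σ11 0 σ21 0 l t) →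
        Set.EqOn l (fun _ : ℝ => σ21 / (σ21 - σ11)) (Set.Icc 0 T)) ∧
    (σ11 < σ21 → ∀ t ∈ Set.Icc (0 : ℝ) T, 1 < (fun _ : ℝ => σ21 / (σ21 - σ11)) t) ∧
    (σ21 < σ11 → ∀ t ∈ Set.Icc (0 : ℝ) T, (fun _ : ℝ => σ21 / (σ21 - σ11)) t < 0) := by
  subst hα
  refine ⟨⟨fun t _ => (k1RHS_const T α1 σ11 σ21 hne _ t).symm,
    fun l _ hl t ht => (hl t ht).trans (k1RHS_const T α1 σ11 σ21 hne l t)⟩, ?_, ?_⟩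
  · intro h t _
    have hd : 0 < σ21 - σ11 := sub_pos.mpr h
    simp only []; rw [lt_div_iff₀ hd]
    linarith
  · intro h t _
    have hd : σ21 - σ11 < 0 := sub_neg.mpr h
    exact div_neg_of_pos_of_neg hσ21 hd
end
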